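/- Let X be a smooth vector field on a manifold M and f, g smooth real functions with f nonvanishing. Define S^X(f) = 2·f·X(X(f)) − (X(f))². If γ is an integral curve of X and φ is a reparametrization such that γ∘φ is an integral curve of f·X (so that f∘(γ∘φ) = φ'), then S^X(f)∘(γ∘φ) = 2·φ'''/φ' − 3·(φ''/φ')². -/

import Mathlib

/-- Let `X` be a smooth vector field on `E` (modelling a manifold `M`), `f` a smooth
nonvanishing function, and set `S^X(f) = 2·f·X(X(f)) − (X(f))²`, where
`X(g)(x) = dg_x(X(x))`.  If `γ` is an integral curve of `X` and `φ` a reparametrization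
such that `γ∘φ` is an integral curve of `f·X` (so `f∘(γ∘φ) = φ'`), then
`S^X(f)∘(γ∘φ) = 2·φ'''/φ' − 3·(φ''/φ')²`. -/
theorem schwartzian_of_reparametrization
    {E : Type*} [NormedAddCommGroup E] [NormedSpace ℝ E]
    (X : E → E) (f : E → ℝ) (γ : ℝ → E) (φ : ℝ → ℝ)
    (hX : ContDiff ℝ (⊤ : ℕ∞) X) (hf : ContDiff ℝ (⊤ : ℕ∞) f) (hf0 : ∀ x, f x ≠ 0)
    (hφ : ContDiff ℝ (⊤ : ℕ∞) φ) (hφ' : ∀ s, deriv φ s ≠ 0)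
    (hγ : ∀ t, HasDerivAt γ (X (γ t)) t)
    (hγφ : ∀ s, HasDerivAt (γ ∘ φ) (f (γ (φ s)) • X (γ (φ s))) s)
    (hfφ : ∀ s, f (γ (φ s)) = deriv φ s) (s : ℝ) :
    2 * f (γ (φ s)) *
        (fderiv ℝ (fun y => fderiv ℝ f y (X y)) (γ (φ s)) (X (γ (φ s))))
      - (fderiv ℝ f (γ (φ s)) (X (γ (φ s)))) ^ 2
    = 2 * deriv (deriv (deriv φ)) s / deriv φ s
      - 3 * (deriv (deriv φ) s / deriv φ s) ^ 2 := by
  set g : E → ℝ := fun y => fderiv ℝ f y (X y) with hg_def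
  have hg : ContDiff ℝ (⊤ : ℕ∞) g := (hf.fderiv_right le_rfl).clm_apply hX
  have hφd : ∀ t, HasDerivAt φ (deriv φ t) t :=
    fun t => (hφ.differentiable (by simp) t).hasDerivAt
  have hfd : ∀ t, HasDerivAt (fun t => f (γ t)) (g (γ t)) t := fun t =>
    (hf.differentiable (by simp) (γ t)).hasFDerivAt.comp_hasDerivAt t (hγ t)
  have hgd : ∀ t, HasDerivAt (fun t => g (γ t)) (fderiv ℝ g (γ t) (X (γ t))) t := fun t =>
    (hg.differentiable (by simp) (γ t)).hasFDerivAt.comp_hasDerivAt t (hγ t)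
  have h2 : deriv φ = fun s => f (γ (φ s)) := funext fun s => (hfφ s).symm
  have hdd : ∀ s, deriv (deriv φ) s = g (γ (φ s)) * deriv φ s := by
    intro s
    have key : HasDerivAt (fun s => f (γ (φ s))) (g (γ (φ s)) * deriv φ s) s :=
      (hfd (φ s)).comp s (hφd s)
    conv_lhs => rw [h2]
    exact key.deriv
  have h3 : deriv (deriv φ) = fun s => g (γ (φ s)) * deriv φ s := funext hdd
  have hφ2 : ContDiff ℝ (⊤ : ℕ∞) (deriv φ) :=
    (contDiff_infty_iff_deriv.1 (hφ.of_le (by simp))).2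
  have hA : HasDerivAt (fun s => g (γ (φ s)))
      (fderiv ℝ g (γ (φ s)) (X (γ (φ s))) * deriv φ s) s := by
    exact (hgd (φ s)).comp s (hφd s)
  have hB : HasDerivAt (deriv φ) (deriv (deriv φ) s) s :=
    (hφ2.differentiable (by simp) s).hasDerivAt
  have hddd : deriv (deriv (deriv φ)) s
      = fderiv ℝ g (γ (φ s)) (X (γ (φ s))) * deriv φ s * deriv φ s
        + g (γ (φ s)) * (g (γ (φ s)) * deriv φ s) := by
    rw [h3]
    have : deriv (fun s => g (γ (φ s)) * deriv φ s) s = _ := (hA.mul hB).deriv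
    rw [this, hdd]
  have ha : deriv φ s ≠ 0 := hφ' s
  rw [hfφ, hddd, hdd]
  field_simp
  ring
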